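/- arXiv:1310.2833 — 4 statements merged into one kernel-verified Lean document; each statement's English description precedes it below -/
import Mathlib

section
/- Let f : X₁ × X₂ → Y be a function between normed vector spaces such that both partial chain differentials δ₁f and δ₂f exist at every point of a neighbourhood Ω of (x,y) in every direction, and such that (x,y,η) ↦ δ₁f(x,y;η) and (x,y,ξ) ↦ δ₂f(x,y;ξ) are continuous on Ω × X₁ and Ω × X₂ respectively. Then f has a total chain differential at (x,y): for every direction (η,ξ) ∈ X₁ × X₂, δf(x,y;(η,ξ)) = δ₁f(x,y;η) + δ₂f(x,y;ξ). -/
/-- `f` has chain differential `L` at `x` in direction `η` (Bernhard). -/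
def HasChainDiffAt {X Y : Type*} [NormedAddCommGroup X] [NormedSpace ℝ X]
    [NormedAddCommGroup Y] [NormedSpace ℝ Y]
    (f : X → Y) (x η : X) (L : Y) : Prop :=
  ∀ (u : ℕ → X) (θ : ℕ → ℝ), (∀ m, θ m ≠ 0) →
    Filter.Tendsto u Filter.atTop (nhds η) →
    Filter.Tendsto θ Filter.atTop (nhds (0 : ℝ)) →
    Filter.Tendsto (fun m => (θ m)⁻¹ • (f (x + θ m • u m) - f x))
      Filter.atTop (nhds L)

open Filter Set Metric

theorem HasChainDiffAt.unique {X Y : Type*} [NormedAddCommGroup X] [NormedSpace ℝ X]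
    [NormedAddCommGroup Y] [NormedSpace ℝ Y] {f : X → Y} {x η : X} {L L' : Y}
    (h : HasChainDiffAt f x η L) (h' : HasChainDiffAt f x η L') : L = L' := by
  have hθ0 : Filter.Tendsto (fun m : ℕ => ((m : ℝ) + 1)⁻¹) atTop (nhds 0) :=
    tendsto_one_div_add_atTop_nhds_zero_nat.congr (by intro m; rw [one_div])
  have hne : ∀ m : ℕ, ((m : ℝ) + 1)⁻¹ ≠ 0 := fun m => by positivity
  exact tendsto_nhds_unique
    (h (fun _ => η) _ hne tendsto_const_nhds hθ0)
    (h' (fun _ => η) _ hne tendsto_const_nhds hθ0)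

theorem HasChainDiffAt.smul {X Y : Type*} [NormedAddCommGroup X] [NormedSpace ℝ X]
    [NormedAddCommGroup Y] [NormedSpace ℝ Y] {f : X → Y} {x η : X} {L : Y}
    {c : ℝ} (hc : c ≠ 0) (h : HasChainDiffAt f x η L) :
    HasChainDiffAt f x (c • η) (c • L) := by
  intro u θ hθ hu hθ0
  have hu' : Filter.Tendsto (fun m => c⁻¹ • u m) atTop (nhds η) := by
    have := hu.const_smul c⁻¹
    rwa [inv_smul_smul₀ hc] at this
  have key := h (fun m => c⁻¹ • u m) (fun m => c * θ m)
    (fun m => mul_ne_zero hc (hθ m)) hu' (by simpa using hθ0.const_mul c)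
  have key2 := key.const_smul c
  refine key2.congr fun m => ?_
  have h1 : x + (c * θ m) • c⁻¹ • u m = x + θ m • u m := by
    rw [smul_smul]; congr 1; field_simp
  rw [h1, smul_smul]; congr 1; rw [mul_inv, ← mul_assoc, mul_inv_cancel₀ hc, one_mul]

theorem HasChainDiffAt.hasDerivAt {X Y : Type*} [NormedAddCommGroup X] [NormedSpace ℝ X]
    [NormedAddCommGroup Y] [NormedSpace ℝ Y] {f : X → Y} {x w : X} {L : Y} (t₀ : ℝ)
    (h : HasChainDiffAt f (x + t₀ • w) w L) :
    HasDerivAt (fun t : ℝ => f (x + t • w)) L t₀ := by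
  rw [hasDerivAt_iff_tendsto_slope]
  rw [Filter.tendsto_iff_seq_tendsto]
  intro s hs
  have hmem : ∀ᶠ m in atTop, s m ≠ t₀ := by
    have := hs.eventually (self_mem_nhdsWithin (s := ({t₀}ᶜ : Set ℝ)))
    simpa using this
  have hst : Filter.Tendsto s atTop (nhds t₀) := hs.mono_right nhdsWithin_le_nhds
  -- modified sequence
  set s' : ℕ → ℝ := fun m => if s m = t₀ then t₀ + 1 else s m with hs'
  have hne : ∀ m, s' m - t₀ ≠ 0 := by
    intro m; by_cases hsm : s m = t₀ <;> simp [hs', hsm, sub_ne_zero]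
  have heq : ∀ᶠ m in atTop, s' m = s m := by
    filter_upwards [hmem] with m hm; simp [hs', hm]
  have hθ : Filter.Tendsto (fun m => s' m - t₀) atTop (nhds 0) := by
    have : Filter.Tendsto (fun m => s m - t₀) atTop (nhds 0) := by
      simpa using hst.sub_const t₀
    exact this.congr' (by filter_upwards [heq] with m hm; rw [hm])
  have key := h (fun _ => w) (fun m => s' m - t₀) hne tendsto_const_nhds hθ
  refine key.congr' ?_
  filter_upwards [heq] with m hm
  have : x + t₀ • w + (s' m - t₀) • w = x + s' m • w := by
    rw [sub_smul]; abel
  rw [this, hm]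
  simp [slope_def_module]

/-- Total chain differential from partial chain differentials, two-variable case.
`D₁ p η` is the partial chain differential of `f` in the first variable at `p`
in direction `η`, and similarly `D₂`; both exist throughout a neighbourhood `Ω`
of `(x, y)` and are continuous on `Ω × X₁` resp. `Ω × X₂`. -/
theorem total_chain_differential_two {X₁ X₂ Y : Type*}
    [NormedAddCommGroup X₁] [NormedSpace ℝ X₁]
    [NormedAddCommGroup X₂] [NormedSpace ℝ X₂]
    [NormedAddCommGroup Y] [NormedSpace ℝ Y]
    (f : X₁ × X₂ → Y) (x : X₁) (y : X₂)
    (Ω : Set (X₁ × X₂)) (hΩ : Ω ∈ nhds (x, y))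
    (D₁ : X₁ × X₂ → X₁ → Y) (D₂ : X₁ × X₂ → X₂ → Y)
    (h₁ : ∀ p ∈ Ω, ∀ η : X₁, HasChainDiffAt (fun x' => f (x', p.2)) p.1 η (D₁ p η))
    (h₂ : ∀ p ∈ Ω, ∀ ξ : X₂, HasChainDiffAt (fun y' => f (p.1, y')) p.2 ξ (D₂ p ξ))
    (hc₁ : ContinuousOn (fun q : (X₁ × X₂) × X₁ => D₁ q.1 q.2) (Ω ×ˢ (Set.univ : Set X₁)))
    (hc₂ : ContinuousOn (fun q : (X₁ × X₂) × X₂ => D₂ q.1 q.2) (Ω ×ˢ (Set.univ : Set X₂))) :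
    ∀ (η : X₁) (ξ : X₂),
      HasChainDiffAt f (x, y) (η, ξ) (D₁ (x, y) η + D₂ (x, y) ξ) := by
  intro η ξ u θ hθne hu hθ0
  have hxyΩ : (x, y) ∈ Ω := mem_of_mem_nhds hΩ
  set a : ℕ → X₁ := fun m => (u m).1 with ha_def
  set b : ℕ → X₂ := fun m => (u m).2 with hb_def
  have ha : Tendsto a atTop (nhds η) := (continuous_fst.tendsto _).comp hu
  have hb : Tendsto b atTop (nhds ξ) := (continuous_snd.tendsto _).comp hu
  -- second (easy) term
  have hB : Tendsto (fun m => (θ m)⁻¹ • (f (x, y + θ m • b m) - f (x, y)))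
      atTop (nhds (D₂ (x, y) ξ)) := h₂ (x, y) hxyΩ ξ b θ hθne hb hθ0
  -- first term via mean value inequality
  set c : Y := D₁ (x, y) η with hc_def
  have hA : Tendsto (fun m => (θ m)⁻¹ • (f (x + θ m • a m, y + θ m • b m) - f (x, y + θ m • b m)))
      atTop (nhds c) := by
    have H : ∀ ε > (0:ℝ), ∀ᶠ m in atTop,
        ‖(θ m)⁻¹ • (f (x + θ m • a m, y + θ m • b m) - f (x, y + θ m • b m)) - c‖ ≤ ε := by
      intro ε hε
      obtain ⟨r, hr, hball⟩ := Metric.mem_nhds_iff.1 hΩ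
      have hcw : ContinuousWithinAt (fun q : (X₁ × X₂) × X₁ => D₁ q.1 q.2)
          (Ω ×ˢ (Set.univ : Set X₁)) ((x, y), η) := hc₁ _ ⟨hxyΩ, Set.mem_univ _⟩
      obtain ⟨δ, hδ, hcont⟩ := Metric.continuousWithinAt_iff.1 hcw ε hε
      set ρ := min r δ with hρ_def
      have hρ : 0 < ρ := lt_min hr hδ
      have h1 : Tendsto (fun m => |θ m| * ‖a m‖) atTop (nhds 0) := by
        simpa using (hθ0.abs.mul ha.norm)
      have h2 : Tendsto (fun m => |θ m| * ‖b m‖) atTop (nhds 0) := by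
        simpa using (hθ0.abs.mul hb.norm)
      have e1 : ∀ᶠ m in atTop, |θ m| * ‖a m‖ < ρ := h1.eventually_lt_const hρ
      have e2 : ∀ᶠ m in atTop, |θ m| * ‖b m‖ < ρ := h2.eventually_lt_const hρ
      have e3 : ∀ᶠ m in atTop, dist (a m) η < δ := by
        filter_upwards [ha (Metric.ball_mem_nhds η hδ)] with m hm
        exact Metric.mem_ball.1 hm
      filter_upwards [e1, e2, e3] with m hm1 hm2 hm3
      set w : X₁ := θ m • a m with hw_def
      set v : X₂ := θ m • b m with hv_def
      set g : ℝ → Y := fun t => f (x + t • w, y + v) with hg_def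
      -- points on the segment stay in Ω and close to (x,y)
      have hP : ∀ t ∈ Set.Icc (0:ℝ) 1,
          (x + t • w, y + v) ∈ Ω ∧ dist ((x + t • w, y + v) : X₁ × X₂) (x, y) < ρ := by
        intro t ht
        have hdist : dist ((x + t • w, y + v) : X₁ × X₂) (x, y)
            = max ‖t • w‖ ‖v‖ := by
          rw [Prod.dist_eq, dist_eq_norm, dist_eq_norm, add_sub_cancel_left, add_sub_cancel_left]
        have htw : ‖t • w‖ < ρ := by
          rw [norm_smul, hw_def, norm_smul]
          calc ‖t‖ * (‖θ m‖ * ‖a m‖) ≤ 1 * (‖θ m‖ * ‖a m‖) := by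
                apply mul_le_mul_of_nonneg_right _ (by positivity)
                rw [Real.norm_eq_abs, abs_of_nonneg ht.1]; exact ht.2
            _ = |θ m| * ‖a m‖ := by rw [one_mul, Real.norm_eq_abs]
            _ < ρ := hm1
        have hv' : ‖v‖ < ρ := by
          rw [hv_def, norm_smul, Real.norm_eq_abs]; exact hm2
        have hlt : dist ((x + t • w, y + v) : X₁ × X₂) (x, y) < ρ := by
          rw [hdist]; exact max_lt htw hv'
        exact ⟨hball (Metric.mem_ball.2 (lt_of_lt_of_le hlt (min_le_left _ _))), hlt⟩
      -- derivative bound on the segment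
      have hderiv : ∀ t ∈ Set.Icc (0:ℝ) 1,
          HasDerivWithinAt (fun t => g t - t • (θ m • c))
            (D₁ (x + t • w, y + v) w - θ m • c) (Set.Icc 0 1) t := by
        intro t ht
        have hΩt := (hP t ht).1
        have hd : HasDerivAt g (D₁ (x + t • w, y + v) w) t :=
          HasChainDiffAt.hasDerivAt t (h₁ (x + t • w, y + v) hΩt w)
        have hd2 : HasDerivAt (fun t : ℝ => t • (θ m • c)) (θ m • c) t := by
          simpa using (hasDerivAt_id t).smul_const (θ m • c)
        exact (hd.sub hd2).hasDerivWithinAt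
      have hbound : ∀ t ∈ Set.Icc (0:ℝ) 1,
          ‖D₁ (x + t • w, y + v) w - θ m • c‖ ≤ |θ m| * ε := by
        intro t ht
        obtain ⟨hΩt, hclose⟩ := hP t ht
        -- homogeneity
        have hhom : D₁ (x + t • w, y + v) w = θ m • D₁ (x + t • w, y + v) (a m) := by
          have hA1 := h₁ (x + t • w, y + v) hΩt w
          have hA2 := (h₁ (x + t • w, y + v) hΩt (a m)).smul (hθne m)
          rw [hw_def] at hA1 ⊢
          exact hA1.unique hA2
        have hd : dist (((x + t • w, y + v), a m) : (X₁ × X₂) × X₁) ((x, y), η) < δ := by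
          rw [Prod.dist_eq]
          exact max_lt (lt_of_lt_of_le hclose (min_le_right _ _)) hm3
        have hcl := hcont ⟨hΩt, Set.mem_univ _⟩ hd
        rw [dist_eq_norm] at hcl
        rw [hhom, ← smul_sub, norm_smul, Real.norm_eq_abs]
        exact mul_le_mul_of_nonneg_left hcl.le (abs_nonneg _)
      have hmvt := Convex.norm_image_sub_le_of_norm_hasDerivWithin_le
        hderiv hbound (convex_Icc 0 1)
        (Set.left_mem_Icc.2 zero_le_one) (Set.right_mem_Icc.2 zero_le_one)
      have hφ : ‖(g 1 - (1:ℝ) • (θ m • c)) - (g 0 - (0:ℝ) • (θ m • c))‖ ≤ |θ m| * ε := by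
        calc _ ≤ |θ m| * ε * ‖(1:ℝ) - 0‖ := hmvt
          _ = |θ m| * ε := by simp
      have hg1 : g 1 = f (x + θ m • a m, y + v) := by rw [hg_def]; simp [hw_def]
      have hg0 : g 0 = f (x, y + v) := by rw [hg_def]; simp
      rw [hg1, hg0, one_smul, zero_smul, sub_zero] at hφ
      have hrw : (θ m)⁻¹ • (f (x + θ m • a m, y + θ m • b m) - f (x, y + θ m • b m)) - c
          = (θ m)⁻¹ • ((f (x + θ m • a m, y + v) - θ m • c) - f (x, y + v)) := by
        rw [hv_def, smul_sub, smul_sub, smul_sub, smul_smul, inv_mul_cancel₀ (hθne m), one_smul]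
        abel
      rw [hrw, norm_smul, Real.norm_eq_abs, abs_inv]
      have : (f (x + θ m • a m, y + v) - θ m • c) - f (x, y + v)
          = (f (x + θ m • a m, y + v) - θ m • c) - (f (x, y + v) - 0 • (θ m • c)) := by
        simp
      calc |θ m|⁻¹ * ‖(f (x + θ m • a m, y + v) - θ m • c) - f (x, y + v)‖
          ≤ |θ m|⁻¹ * (|θ m| * ε) := by
            apply mul_le_mul_of_nonneg_left _ (by positivity)
            have h0 : f (x, y + v) = f (x, y + v) - (0:ℝ) • (θ m • c) := by simp
            rw [h0] at *
            convert hφ using 2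
            rfl
            simp
        _ = ε := by
            rw [← mul_assoc, inv_mul_cancel₀ (by simpa using hθne m), one_mul]
    -- conclude tendsto from the ε-bound
    rw [Metric.tendsto_atTop]
    intro ε hε
    obtain ⟨N, hN⟩ := (H (ε/2) (half_pos hε)).exists_forall_of_atTop
    exact ⟨N, fun n hn => by
      rw [dist_eq_norm]
      exact lt_of_le_of_lt (hN n hn) (half_lt_self hε)⟩
  -- combine
  refine (hA.add hB).congr fun m => ?_
  have hsplit : ((x, y) + θ m • u m : X₁ × X₂) = (x + θ m • a m, y + θ m • b m) := rfl
  rw [hsplit, ← smul_add, sub_add_sub_cancel]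
end

section
/- Second-order case of the chain-differential Faà di Bruno formula: under the hypotheses that g : X → Y has first and second order chain differentials in directions η₁, η₂, and f : Y → Z has first and second order chain differentials at g(x) which are continuous and linear in the directions, one has δ²(f∘g)(x; η₁, η₂) = δ²f(g(x); δg(x;η₁), δg(x;η₂)) + δf(g(x); δ²g(x; η₁, η₂)). -/
/-- Second-order Faà di Bruno for chain differentials:
`δ²(f∘g)(x;η₁,η₂) = δ²f(g x; δg(x;η₁), δg(x;η₂)) + δf(g x; δ²g(x;η₁,η₂))`.
Here `Dg₁ x' ξ = δg(x';ξ)`, `Dg₂ = δ²g(x;η₁,η₂)`, `Df₁ y ξ = δf(y;ξ)`,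
`Df₂ y ξ₁ ξ₂ = δ²f(y;ξ₁,ξ₂)`. The conclusion exhibits the first-order chain
differential `D₁` of `f ∘ g` in direction `η₁` and states that its chain
differential at `x` in direction `η₂` is the claimed sum. -/
theorem faa_di_bruno_second_order {X Y Z : Type*}
    [NormedAddCommGroup X] [NormedSpace ℝ X]
    [NormedAddCommGroup Y] [NormedSpace ℝ Y]
    [NormedAddCommGroup Z] [NormedSpace ℝ Z]
    (f : Y → Z) (g : X → Y) (x η₁ η₂ : X)
    (Dg₁ : X → X → Y) (Dg₂ : Y)
    (Df₁ : Y → Y → Z) (Df₂ : Y → Y → Y → Z)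
    (hg₁ : ∀ (x' : X) (ξ : X), HasChainDiffAt g x' ξ (Dg₁ x' ξ))
    (hg₂ : HasChainDiffAt (fun x' => Dg₁ x' η₁) x η₂ Dg₂)
    (hf₁ : ∀ (y ξ : Y), HasChainDiffAt f y ξ (Df₁ y ξ))
    (hf₂ : ∀ (y ξ₁ ξ₂ : Y), HasChainDiffAt (fun y' => Df₁ y' ξ₁) y ξ₂ (Df₂ y ξ₁ ξ₂))
    (hf₁cont : Continuous (fun p : Y × Y => Df₁ p.1 p.2))
    (hf₂cont : Continuous (fun p : Y × Y × Y => Df₂ p.1 p.2.1 p.2.2))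
    (hf₁lin : ∀ y : Y, IsLinearMap ℝ (Df₁ y))
    (hf₂lin₁ : ∀ (y ξ₂ : Y), IsLinearMap ℝ (fun ξ₁ => Df₂ y ξ₁ ξ₂))
    (hf₂lin₂ : ∀ (y ξ₁ : Y), IsLinearMap ℝ (Df₂ y ξ₁)) :
    ∃ D₁ : X → Z,
      (∀ x' : X, HasChainDiffAt (fun x'' => f (g x'')) x' η₁ (D₁ x')) ∧
      HasChainDiffAt D₁ x η₂
        (Df₂ (g x) (Dg₁ x η₁) (Dg₁ x η₂) + Df₁ (g x) Dg₂) := by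
  refine ⟨fun x' => Df₁ (g x') (Dg₁ x' η₁), ?_, ?_⟩
  · -- first-order chain rule
    intro x' u θ hθ hu hθ0
    set v : ℕ → Y := fun m => (θ m)⁻¹ • (g (x' + θ m • u m) - g x') with hv_def
    have hv : Filter.Tendsto v Filter.atTop (nhds (Dg₁ x' η₁)) :=
      hg₁ x' η₁ u θ hθ hu hθ0
    have key : ∀ m, g (x' + θ m • u m) = g x' + θ m • v m := by
      intro m
      simp [hv_def, smul_inv_smul₀ (hθ m)]
    have := hf₁ (g x') (Dg₁ x' η₁) v θ hθ hv hθ0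
    refine this.congr (fun m => ?_)
    simp only [← key m]
  · -- second order
    intro u θ hθ hu hθ0
    set v : ℕ → Y := fun m => (θ m)⁻¹ • (g (x + θ m • u m) - g x) with hv_def
    have hv : Filter.Tendsto v Filter.atTop (nhds (Dg₁ x η₂)) :=
      hg₁ x η₂ u θ hθ hu hθ0
    have key : ∀ m, g (x + θ m • u m) = g x + θ m • v m := by
      intro m
      simp [hv_def, smul_inv_smul₀ (hθ m)]
    set w : ℕ → Y := fun m => (θ m)⁻¹ • (Dg₁ (x + θ m • u m) η₁ - Dg₁ x η₁) with hw_def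
    have hw : Filter.Tendsto w Filter.atTop (nhds Dg₂) := hg₂ u θ hθ hu hθ0
    have hy : Filter.Tendsto (fun m => g (x + θ m • u m)) Filter.atTop (nhds (g x)) := by
      have h1 : Filter.Tendsto (fun m => θ m • v m) Filter.atTop
          (nhds ((0:ℝ) • Dg₁ x η₂)) := hθ0.smul hv
      rw [zero_smul] at h1
      have h2 : Filter.Tendsto (fun m => g x + θ m • v m) Filter.atTop (nhds (g x + 0)) :=
        Filter.Tendsto.const_add _ h1
      rw [add_zero] at h2
      exact h2.congr (fun m => (key m).symm)
    -- term 1 : Df₁ (g (x + θ u)) (w m) → Df₁ (g x) Dg₂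
    have term1 : Filter.Tendsto (fun m => Df₁ (g (x + θ m • u m)) (w m)) Filter.atTop
        (nhds (Df₁ (g x) Dg₂)) :=
      (hf₁cont.tendsto (g x, Dg₂)).comp (hy.prodMk_nhds hw)
    -- term 2 : second differential of f
    have term2 : Filter.Tendsto
        (fun m => (θ m)⁻¹ • (Df₁ (g x + θ m • v m) (Dg₁ x η₁) - Df₁ (g x) (Dg₁ x η₁)))
        Filter.atTop (nhds (Df₂ (g x) (Dg₁ x η₁) (Dg₁ x η₂))) :=
      hf₂ (g x) (Dg₁ x η₁) (Dg₁ x η₂) v θ hθ hv hθ0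
    have hsum := term2.add term1
    refine hsum.congr (fun m => ?_)
    have hlin := hf₁lin (g (x + θ m • u m))
    have e1 : Df₁ (g (x + θ m • u m)) (Dg₁ (x + θ m • u m) η₁)
        - Df₁ (g (x + θ m • u m)) (Dg₁ x η₁)
        = Df₁ (g (x + θ m • u m)) (Dg₁ (x + θ m • u m) η₁ - Dg₁ x η₁) := by
      rw [hlin.map_sub]
    have e2 : (θ m)⁻¹ • Df₁ (g (x + θ m • u m)) (Dg₁ (x + θ m • u m) η₁ - Dg₁ x η₁)
        = Df₁ (g (x + θ m • u m)) (w m) := by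
      rw [← hlin.map_smul]
    simp only [← key m]
    rw [← e2, ← e1, smul_sub, smul_sub, smul_sub]
    abel
end

section
/- Third-order case of the chain-differential Faà di Bruno formula: under the hypotheses that g has chain differentials up to order 3 in directions among {η₁,η₂,η₃} and f has chain differentials up to order 3 at g(x), continuous and multilinear in the directions, δ³(f∘g)(x; η₁,η₂,η₃) = δ³f(g(x); δg(x;η₁), δg(x;η₂), δg(x;η₃)) + δ²f(g(x); δ²g(x;η₁,η₂), δg(x;η₃)) + δ²f(g(x); δ²g(x;η₁,η₃), δg(x;η₂)) + δ²f(g(x); δ²g(x;η₂,η₃), δg(x;η₁)) + δf(g(x); δ³g(x;η₁,η₂,η₃)), corresponding to the 5 partitions of a 3-element set. -/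
open Filter Topology

section helpers

variable {Y Z : Type*} [NormedAddCommGroup Y] [NormedSpace ℝ Y]
  [NormedAddCommGroup Z] [NormedSpace ℝ Z]

lemma HasChainDiffAt.seq_decomp {F : Y → Z} {x' ξ : Y} {L : Z} (h : HasChainDiffAt F x' ξ L)
    {u : ℕ → Y} {θ : ℕ → ℝ} (hθ : ∀ m, θ m ≠ 0) (hu : Tendsto u atTop (𝓝 ξ))
    (hθ0 : Tendsto θ atTop (𝓝 (0:ℝ))) :
    ∃ v : ℕ → Z, Tendsto v atTop (𝓝 L) ∧ ∀ m, F (x' + θ m • u m) = F x' + θ m • v m :=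
  ⟨_, h u θ hθ hu hθ0, fun m => by rw [smul_inv_smul₀ (hθ m)]; abel⟩

lemma chain_line_deriv {F : Y → Z} {y₀ c : Y} {t₀ : ℝ} {L : Z}
    (h : HasChainDiffAt F (y₀ + t₀ • c) c L) :
    HasDerivAt (fun t : ℝ => F (y₀ + t • c)) L t₀ := by
  rw [hasDerivAt_iff_tendsto_slope, Filter.tendsto_iff_seq_tendsto]
  intro θ hθ
  have hmem : ∀ᶠ m in atTop, θ m ≠ t₀ := hθ self_mem_nhdsWithin
  obtain ⟨N, hN⟩ := eventually_atTop.1 hmem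
  have hθt : Tendsto θ atTop (𝓝 t₀) := hθ.mono_right nhdsWithin_le_nhds
  have h0 : Tendsto (fun m => θ (m + N) - t₀) atTop (𝓝 0) := by
    have := (hθt.comp (tendsto_add_atTop_nat N)).sub_const t₀
    simpa using this
  have key := h (fun _ => c) (fun m => θ (m + N) - t₀)
    (fun m => sub_ne_zero.2 (hN _ (Nat.le_add_left N m)))
    tendsto_const_nhds h0
  rw [show (slope (fun t => F (y₀ + t • c)) t₀ ∘ θ)
      = fun m => slope (fun t => F (y₀ + t • c)) t₀ (θ m) from rfl,
    ← Filter.tendsto_add_atTop_iff_nat N]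
  refine key.congr fun m => ?_
  rw [slope_def_module, show y₀ + t₀ • c + (θ (m + N) - t₀) • c = y₀ + θ (m + N) • c by module]

/-- Schwarz/Clairaut symmetry for second chain differentials. -/
lemma df2_symm {f : Y → Z} {Df₁ : Y → Y → Z} {Df₂ : Y → Y → Y → Z}
    (hf₁ : ∀ y ξ, HasChainDiffAt f y ξ (Df₁ y ξ))
    (hf₂ : ∀ y ξ₁ ξ₂, HasChainDiffAt (fun y' => Df₁ y' ξ₁) y ξ₂ (Df₂ y ξ₁ ξ₂))
    (hf₂cont : Continuous fun p : Y × Y × Y => Df₂ p.1 p.2.1 p.2.2)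
    (y a b : Y) : Df₂ y a b = Df₂ y b a := by
  have claim : ∀ (a b : Y), ∀ ε > (0:ℝ), ∃ δ > (0:ℝ), ∀ t : ℝ, 0 < t → t < δ →
      ‖(f (y + t • a + t • b) - f (y + t • a) - f (y + t • b) + f y) - (t * t) • Df₂ y a b‖
        ≤ ε * (t * t) := by
    intro a b ε hε
    set A := Df₂ y a b with hA
    have hc : Continuous fun q : Y => Df₂ q a b :=
      hf₂cont.comp (continuous_id.prodMk (continuous_const.prodMk continuous_const))
    obtain ⟨δ₀, hδ₀, hball⟩ := Metric.continuousAt_iff.1 hc.continuousAt ε hε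
    refine ⟨δ₀ / (‖a‖ + ‖b‖ + 1), by positivity, fun t ht htδ => ?_⟩
    have hpt : ∀ σ τ : ℝ, σ ∈ Set.Icc 0 t → τ ∈ Set.Icc 0 t →
        ‖Df₂ (y + σ • a + τ • b) a b - A‖ ≤ ε := by
      intro σ τ hσ hτ
      have hd : dist (y + σ • a + τ • b) y < δ₀ := by
        rw [dist_eq_norm, show y + σ • a + τ • b - y = σ • a + τ • b by abel]
        calc ‖σ • a + τ • b‖ ≤ ‖σ • a‖ + ‖τ • b‖ := norm_add_le _ _
          _ ≤ t * ‖a‖ + t * ‖b‖ := by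
              rw [norm_smul, norm_smul, Real.norm_eq_abs, Real.norm_eq_abs,
                abs_of_nonneg hσ.1, abs_of_nonneg hτ.1]
              gcongr
              exacts [hσ.2, hτ.2]
          _ < δ₀ := by
              have h1 : t * (‖a‖ + ‖b‖ + 1) < δ₀ := by
                rw [← lt_div_iff₀ (by positivity)]; exact htδ
              nlinarith [norm_nonneg a, norm_nonneg b]
      have := hball hd
      rw [dist_eq_norm] at this
      exact this.le
    have inner : ∀ σ ∈ Set.Icc (0:ℝ) t,
        ‖(Df₁ (y + σ • a + t • b) a - Df₁ (y + σ • a) a) - t • A‖ ≤ ε * t := by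
      intro σ hσ
      have hderiv : ∀ τ ∈ Set.Icc (0:ℝ) t,
          HasDerivWithinAt (fun τ' : ℝ => Df₁ (y + σ • a + τ' • b) a - τ' • A)
            (Df₂ (y + σ • a + τ • b) a b - A) (Set.Icc 0 t) τ := by
        intro τ _
        have h1 : HasDerivAt (fun τ' : ℝ => Df₁ (y + σ • a + τ' • b) a)
            (Df₂ (y + σ • a + τ • b) a b) τ := chain_line_deriv (hf₂ (y + σ • a + τ • b) a b)
        have h2 : HasDerivAt (fun τ' : ℝ => τ' • A) A τ := by
          simpa using (hasDerivAt_id τ).smul_const A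
        exact (h1.sub h2).hasDerivWithinAt
      have := (convex_Icc (0:ℝ) t).norm_image_sub_le_of_norm_hasDerivWithin_le hderiv
        (fun τ hτ => hpt σ τ hσ hτ) (Set.left_mem_Icc.2 ht.le) (Set.right_mem_Icc.2 ht.le)
      simpa [sub_zero, Real.norm_eq_abs, abs_of_nonneg ht.le, sub_right_comm] using this
    have houter : ∀ σ ∈ Set.Icc (0:ℝ) t,
        HasDerivWithinAt (fun σ' : ℝ => f (y + t • b + σ' • a) - f (y + σ' • a) - σ' • (t • A))
          ((Df₁ (y + σ • a + t • b) a - Df₁ (y + σ • a) a) - t • A) (Set.Icc 0 t) σ := by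
      intro σ _
      have h1 : HasDerivAt (fun σ' : ℝ => f (y + t • b + σ' • a))
          (Df₁ (y + t • b + σ • a) a) σ := chain_line_deriv (hf₁ (y + t • b + σ • a) a)
      have h2 : HasDerivAt (fun σ' : ℝ => f (y + σ' • a)) (Df₁ (y + σ • a) a) σ :=
        chain_line_deriv (hf₁ (y + σ • a) a)
      have h3 : HasDerivAt (fun σ' : ℝ => σ' • (t • A)) (t • A) σ := by
        simpa using (hasDerivAt_id σ).smul_const (t • A)
      have := (h1.sub h2).sub h3
      rw [show y + t • b + σ • a = y + σ • a + t • b by module] at this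
      exact this.hasDerivWithinAt
    have mvt := (convex_Icc (0:ℝ) t).norm_image_sub_le_of_norm_hasDerivWithin_le houter
      (fun σ hσ => inner σ hσ) (Set.left_mem_Icc.2 ht.le) (Set.right_mem_Icc.2 ht.le)
    rw [Real.norm_eq_abs, sub_zero, abs_of_nonneg ht.le] at mvt
    calc ‖(f (y + t • a + t • b) - f (y + t • a) - f (y + t • b) + f y) - (t * t) • A‖
        = ‖(f (y + t • b + t • a) - f (y + t • a) - t • (t • A))
            - (f (y + t • b + (0:ℝ) • a) - f (y + (0:ℝ) • a) - (0:ℝ) • (t • A))‖ := by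
          rw [show y + t • b + t • a = y + t • a + t • b by module]
          simp only [zero_smul, add_zero]
          congr 1
          module
      _ ≤ ε * t * t := mvt
      _ = ε * (t * t) := by ring
  have hlim : ∀ (a b : Y), Tendsto (fun n : ℕ =>
      ((1/((n:ℝ)+1)) * (1/((n:ℝ)+1)))⁻¹ •
        (f (y + (1/((n:ℝ)+1)) • a + (1/((n:ℝ)+1)) • b) - f (y + (1/((n:ℝ)+1)) • a)
          - f (y + (1/((n:ℝ)+1)) • b) + f y)) atTop (𝓝 (Df₂ y a b)) := by
    intro a b
    rw [Metric.tendsto_atTop]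
    intro ε hε
    obtain ⟨δ, hδ, hclaim⟩ := claim a b (ε/2) (by positivity)
    have htn : Tendsto (fun n : ℕ => 1/((n:ℝ)+1)) atTop (𝓝 0) :=
      tendsto_one_div_add_atTop_nhds_zero_nat
    obtain ⟨N, hN⟩ := eventually_atTop.1 (htn.eventually (eventually_lt_nhds hδ))
    refine ⟨N, fun n hn => ?_⟩
    set t : ℝ := 1/((n:ℝ)+1) with htdef
    have ht : 0 < t := by positivity
    have ht2 : t * t ≠ 0 := by positivity
    have hb := hclaim t ht (hN n hn)
    rw [dist_eq_norm]
    have heq : ((t*t))⁻¹ • (f (y + t • a + t • b) - f (y + t • a) - f (y + t • b) + f y)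
        - Df₂ y a b = (t*t)⁻¹ • ((f (y + t • a + t • b) - f (y + t • a) - f (y + t • b) + f y)
          - (t*t) • Df₂ y a b) := by
      rw [smul_sub, smul_smul, inv_mul_cancel₀ ht2, one_smul]
    rw [heq, norm_smul, Real.norm_eq_abs, abs_of_nonneg (by positivity)]
    calc (t*t)⁻¹ * ‖_‖ ≤ (t*t)⁻¹ * (ε/2 * (t*t)) := by gcongr
      _ = ε/2 := by field_simp
      _ < ε := by linarith
  have h1 := hlim a b
  have h2 := hlim b a
  have heqfun : (fun n : ℕ =>
      ((1/((n:ℝ)+1)) * (1/((n:ℝ)+1)))⁻¹ •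
        (f (y + (1/((n:ℝ)+1)) • a + (1/((n:ℝ)+1)) • b) - f (y + (1/((n:ℝ)+1)) • a)
          - f (y + (1/((n:ℝ)+1)) • b) + f y)) = (fun n : ℕ =>
      ((1/((n:ℝ)+1)) * (1/((n:ℝ)+1)))⁻¹ •
        (f (y + (1/((n:ℝ)+1)) • b + (1/((n:ℝ)+1)) • a) - f (y + (1/((n:ℝ)+1)) • b)
          - f (y + (1/((n:ℝ)+1)) • a) + f y)) := by
    funext n
    rw [show y + (1/((n:ℝ)+1)) • a + (1/((n:ℝ)+1)) • b
      = y + (1/((n:ℝ)+1)) • b + (1/((n:ℝ)+1)) • a by module]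
    module
  rw [heqfun] at h1
  exact tendsto_nhds_unique h1 h2

end helpers

/-- Third-order Faà di Bruno for chain differentials, corresponding to the 5
partitions of a 3-element set. `Dg₁ x' ξ = δg(x';ξ)`,
`Dg₂ x' ξ₁ ξ₂ = δ²g(x';ξ₁,ξ₂)`, `Dg₃ = δ³g(x;η₁,η₂,η₃)`, and similarly
`Df₁, Df₂, Df₃` are the chain differentials of `f` up to order 3, continuous
and multilinear in the directions. The conclusion exhibits the first- and
second-order chain differentials `D₁, D₂` of `f ∘ g` and gives the formula
for the third one. -/
theorem faa_di_bruno_third_order {X Y Z : Type*}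
    [NormedAddCommGroup X] [NormedSpace ℝ X]
    [NormedAddCommGroup Y] [NormedSpace ℝ Y]
    [NormedAddCommGroup Z] [NormedSpace ℝ Z]
    (f : Y → Z) (g : X → Y) (x η₁ η₂ η₃ : X)
    (Dg₁ : X → X → Y) (Dg₂ : X → X → X → Y) (Dg₃ : Y)
    (Df₁ : Y → Y → Z) (Df₂ : Y → Y → Y → Z) (Df₃ : Y → Y → Y → Y → Z)
    (hg₁ : ∀ (x' ξ : X), HasChainDiffAt g x' ξ (Dg₁ x' ξ))
    (hg₂ : ∀ (x' ξ₁ ξ₂ : X), HasChainDiffAt (fun z => Dg₁ z ξ₁) x' ξ₂ (Dg₂ x' ξ₁ ξ₂))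
    (hg₃ : HasChainDiffAt (fun z => Dg₂ z η₁ η₂) x η₃ Dg₃)
    (hf₁ : ∀ (y ξ : Y), HasChainDiffAt f y ξ (Df₁ y ξ))
    (hf₂ : ∀ (y ξ₁ ξ₂ : Y), HasChainDiffAt (fun y' => Df₁ y' ξ₁) y ξ₂ (Df₂ y ξ₁ ξ₂))
    (hf₃ : ∀ (y ξ₁ ξ₂ ξ₃ : Y),
      HasChainDiffAt (fun y' => Df₂ y' ξ₁ ξ₂) y ξ₃ (Df₃ y ξ₁ ξ₂ ξ₃))
    (hf₁cont : Continuous (fun p : Y × Y => Df₁ p.1 p.2))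
    (hf₂cont : Continuous (fun p : Y × Y × Y => Df₂ p.1 p.2.1 p.2.2))
    (hf₃cont : Continuous (fun p : Y × Y × Y × Y => Df₃ p.1 p.2.1 p.2.2.1 p.2.2.2))
    (hf₁lin : ∀ y : Y, IsLinearMap ℝ (Df₁ y))
    (hf₂lin₁ : ∀ (y ξ₂ : Y), IsLinearMap ℝ (fun ξ₁ => Df₂ y ξ₁ ξ₂))
    (hf₂lin₂ : ∀ (y ξ₁ : Y), IsLinearMap ℝ (Df₂ y ξ₁))
    (hf₃lin₁ : ∀ (y ξ₂ ξ₃ : Y), IsLinearMap ℝ (fun ξ₁ => Df₃ y ξ₁ ξ₂ ξ₃))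
    (hf₃lin₂ : ∀ (y ξ₁ ξ₃ : Y), IsLinearMap ℝ (fun ξ₂ => Df₃ y ξ₁ ξ₂ ξ₃))
    (hf₃lin₃ : ∀ (y ξ₁ ξ₂ : Y), IsLinearMap ℝ (Df₃ y ξ₁ ξ₂)) :
    ∃ D₁ D₂ : X → Z,
      (∀ x' : X, HasChainDiffAt (fun x'' => f (g x'')) x' η₁ (D₁ x')) ∧
      (∀ x' : X, HasChainDiffAt D₁ x' η₂ (D₂ x')) ∧
      HasChainDiffAt D₂ x η₃
        (Df₃ (g x) (Dg₁ x η₁) (Dg₁ x η₂) (Dg₁ x η₃)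
          + Df₂ (g x) (Dg₂ x η₁ η₂) (Dg₁ x η₃)
          + Df₂ (g x) (Dg₂ x η₁ η₃) (Dg₁ x η₂)
          + Df₂ (g x) (Dg₂ x η₂ η₃) (Dg₁ x η₁)
          + Df₁ (g x) Dg₃) := by
  refine ⟨fun z => Df₁ (g z) (Dg₁ z η₁),
    fun z => Df₂ (g z) (Dg₁ z η₁) (Dg₁ z η₂) + Df₁ (g z) (Dg₂ z η₁ η₂), ?_, ?_, ?_⟩
  · -- first order
    intro x' u θ hθ hu hθ0
    obtain ⟨v, hv, hgv⟩ := (hg₁ x' η₁).seq_decomp hθ hu hθ0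
    exact (hf₁ (g x') (Dg₁ x' η₁) v θ hθ hv hθ0).congr fun m => by simp only [hgv m]
  · -- second order
    intro x' u θ hθ hu hθ0
    obtain ⟨v, hv, hgv⟩ := (hg₁ x' η₂).seq_decomp hθ hu hθ0
    obtain ⟨w, hw, hDw'⟩ := (hg₂ x' η₁ η₂).seq_decomp hθ hu hθ0
    have hDw : ∀ m, Dg₁ (x' + θ m • u m) η₁ = Dg₁ x' η₁ + θ m • w m := hDw'
    have hgp : Tendsto (fun m => g (x' + θ m • u m)) atTop (𝓝 (g x')) := by
      have : Tendsto (fun m => g x' + θ m • v m) atTop (𝓝 (g x' + (0:ℝ) • Dg₁ x' η₂)) :=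
        tendsto_const_nhds.add (hθ0.smul hv)
      simpa using this.congr fun m => (hgv m).symm
    have T1 : Tendsto (fun m => Df₁ (g (x' + θ m • u m)) (w m)) atTop
        (𝓝 (Df₁ (g x') (Dg₂ x' η₁ η₂))) :=
      (hf₁cont.tendsto (g x', Dg₂ x' η₁ η₂)).comp (hgp.prodMk_nhds hw)
    have T2 := hf₂ (g x') (Dg₁ x' η₁) (Dg₁ x' η₂) v θ hθ hv hθ0
    have key : ∀ m, Df₁ (g (x' + θ m • u m)) (w m)
        + (θ m)⁻¹ • (Df₁ (g x' + θ m • v m) (Dg₁ x' η₁) - Df₁ (g x') (Dg₁ x' η₁))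
        = (θ m)⁻¹ • ((Df₁ (g (x' + θ m • u m)) (Dg₁ (x' + θ m • u m) η₁))
            - Df₁ (g x') (Dg₁ x' η₁)) := by
      intro m
      rw [← hgv m, hDw m, (hf₁lin (g (x' + θ m • u m))).map_add,
        (hf₁lin (g (x' + θ m • u m))).map_smul]
      simp only [smul_add, smul_sub, smul_smul, inv_mul_cancel₀ (hθ m), one_smul]
      abel
    have htot := (T1.add T2).congr key
    show Tendsto _ atTop
      (𝓝 (Df₂ (g x') (Dg₁ x' η₁) (Dg₁ x' η₂) + Df₁ (g x') (Dg₂ x' η₁ η₂)))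
    rw [add_comm (Df₂ (g x') (Dg₁ x' η₁) (Dg₁ x' η₂)) (Df₁ (g x') (Dg₂ x' η₁ η₂))]
    exact htot
  · -- third order
    intro u θ hθ hu hθ0
    obtain ⟨v, hv, hgv⟩ := (hg₁ x η₃).seq_decomp hθ hu hθ0
    obtain ⟨w₁, hw₁, hDw₁'⟩ := (hg₂ x η₁ η₃).seq_decomp hθ hu hθ0
    obtain ⟨w₂, hw₂, hDw₂'⟩ := (hg₂ x η₂ η₃).seq_decomp hθ hu hθ0
    obtain ⟨w₃, hw₃, hDw₃'⟩ := hg₃.seq_decomp hθ hu hθ0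
    have hDw₁ : ∀ m, Dg₁ (x + θ m • u m) η₁ = Dg₁ x η₁ + θ m • w₁ m := hDw₁'
    have hDw₂ : ∀ m, Dg₁ (x + θ m • u m) η₂ = Dg₁ x η₂ + θ m • w₂ m := hDw₂'
    have hDw₃ : ∀ m, Dg₂ (x + θ m • u m) η₁ η₂ = Dg₂ x η₁ η₂ + θ m • w₃ m := hDw₃'
    have hgp : Tendsto (fun m => g (x + θ m • u m)) atTop (𝓝 (g x)) := by
      have : Tendsto (fun m => g x + θ m • v m) atTop (𝓝 (g x + (0:ℝ) • Dg₁ x η₃)) :=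
        tendsto_const_nhds.add (hθ0.smul hv)
      simpa using this.congr fun m => (hgv m).symm
    have hA : Tendsto (fun m => Dg₁ (x + θ m • u m) η₁) atTop (𝓝 (Dg₁ x η₁)) := by
      have : Tendsto (fun m => Dg₁ x η₁ + θ m • w₁ m)
          atTop (𝓝 (Dg₁ x η₁ + (0:ℝ) • Dg₂ x η₁ η₃)) :=
        tendsto_const_nhds.add (hθ0.smul hw₁)
      simpa using this.congr fun m => (hDw₁ m).symm
    have T1 : Tendsto (fun m => Df₂ (g (x + θ m • u m)) (Dg₁ (x + θ m • u m) η₁) (w₂ m)) atTop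
        (𝓝 (Df₂ (g x) (Dg₁ x η₁) (Dg₂ x η₂ η₃))) :=
      (hf₂cont.tendsto (g x, Dg₁ x η₁, Dg₂ x η₂ η₃)).comp
        (hgp.prodMk_nhds (hA.prodMk_nhds hw₂))
    have T2 : Tendsto (fun m => Df₂ (g (x + θ m • u m)) (w₁ m) (Dg₁ x η₂)) atTop
        (𝓝 (Df₂ (g x) (Dg₂ x η₁ η₃) (Dg₁ x η₂))) :=
      (hf₂cont.tendsto (g x, Dg₂ x η₁ η₃, Dg₁ x η₂)).comp
        (hgp.prodMk_nhds (hw₁.prodMk_nhds tendsto_const_nhds))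
    have T3 : Tendsto (fun m => (θ m)⁻¹ • (Df₂ (g (x + θ m • u m)) (Dg₁ x η₁) (Dg₁ x η₂)
          - Df₂ (g x) (Dg₁ x η₁) (Dg₁ x η₂))) atTop
        (𝓝 (Df₃ (g x) (Dg₁ x η₁) (Dg₁ x η₂) (Dg₁ x η₃))) :=
      (hf₃ (g x) (Dg₁ x η₁) (Dg₁ x η₂) (Dg₁ x η₃) v θ hθ hv hθ0).congr fun m => by rw [hgv m]
    have T4 : Tendsto (fun m => Df₁ (g (x + θ m • u m)) (w₃ m)) atTop
        (𝓝 (Df₁ (g x) Dg₃)) :=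
      (hf₁cont.tendsto (g x, Dg₃)).comp (hgp.prodMk_nhds hw₃)
    have T5 : Tendsto (fun m => (θ m)⁻¹ • (Df₁ (g (x + θ m • u m)) (Dg₂ x η₁ η₂)
          - Df₁ (g x) (Dg₂ x η₁ η₂))) atTop
        (𝓝 (Df₂ (g x) (Dg₂ x η₁ η₂) (Dg₁ x η₃))) :=
      (hf₂ (g x) (Dg₂ x η₁ η₂) (Dg₁ x η₃) v θ hθ hv hθ0).congr fun m => by rw [hgv m]
    have key : ∀ m,
        (((θ m)⁻¹ • (Df₂ (g (x + θ m • u m)) (Dg₁ x η₁) (Dg₁ x η₂)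
              - Df₂ (g x) (Dg₁ x η₁) (Dg₁ x η₂))
          + (θ m)⁻¹ • (Df₁ (g (x + θ m • u m)) (Dg₂ x η₁ η₂) - Df₁ (g x) (Dg₂ x η₁ η₂))
          + Df₂ (g (x + θ m • u m)) (w₁ m) (Dg₁ x η₂))
          + Df₂ (g (x + θ m • u m)) (Dg₁ (x + θ m • u m) η₁) (w₂ m))
          + Df₁ (g (x + θ m • u m)) (w₃ m)
        = (θ m)⁻¹ • ((Df₂ (g (x + θ m • u m)) (Dg₁ (x + θ m • u m) η₁)
              (Dg₁ (x + θ m • u m) η₂)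
            + Df₁ (g (x + θ m • u m)) (Dg₂ (x + θ m • u m) η₁ η₂))
          - (Df₂ (g x) (Dg₁ x η₁) (Dg₁ x η₂) + Df₁ (g x) (Dg₂ x η₁ η₂))) := by
      intro m
      set p := x + θ m • u m with hp
      have l2a : ∀ (q r s t : Y), Df₂ q (r + s) t = Df₂ q r t + Df₂ q s t :=
        fun q r s t => (hf₂lin₁ q t).map_add r s
      have l2s : ∀ (c : ℝ) (q r t : Y), Df₂ q (c • r) t = c • Df₂ q r t :=
        fun c q r t => (hf₂lin₁ q t).map_smul c r
      have l2a' : ∀ (q r s t : Y), Df₂ q r (s + t) = Df₂ q r s + Df₂ q r t :=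
        fun q r s t => (hf₂lin₂ q r).map_add s t
      have l2s' : ∀ (c : ℝ) (q r t : Y), Df₂ q r (c • t) = c • Df₂ q r t :=
        fun c q r t => (hf₂lin₂ q r).map_smul c t
      have l1a : ∀ (q r s : Y), Df₁ q (r + s) = Df₁ q r + Df₁ q s :=
        fun q r s => (hf₁lin q).map_add r s
      have l1s : ∀ (c : ℝ) (q r : Y), Df₁ q (c • r) = c • Df₁ q r :=
        fun c q r => (hf₁lin q).map_smul c r
      rw [hDw₁ m, hDw₂ m, hDw₃ m]
      simp only [l2a, l2s, l2a', l2s', l1a, l1s, smul_add, smul_sub, smul_smul,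
        ← mul_assoc, inv_mul_cancel₀ (hθ m), one_mul, one_smul]
      abel
    have total := ((((T3.add T5).add T2).add T1).add T4).congr key
    have hsym : Df₂ (g x) (Dg₂ x η₂ η₃) (Dg₁ x η₁) = Df₂ (g x) (Dg₁ x η₁) (Dg₂ x η₂ η₃) :=
      df2_symm hf₁ hf₂ hf₂cont (g x) (Dg₂ x η₂ η₃) (Dg₁ x η₁)
    rw [hsym]
    exact total
end

section
/- In the setting of the second-order chain rule step: let F : Y × Y → Z be continuous and linear in its second argument in a neighbourhood of (g(x), h(x)), with partial chain differentials δ₁F and δ₂F existing and continuous there, and let g, h : X → Y have chain differentials at x in direction η. Then the map x ↦ F(g(x), h(x)) has a chain differential at x in direction η equal to δ₁F(g(x), h(x); δg(x;η)) + F(g(x), δh(x;η)). -/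
open Filter Set Metric

section Helpers

variable {Y Z : Type*} [NormedAddCommGroup Y] [NormedSpace ℝ Y]
  [NormedAddCommGroup Z] [NormedSpace ℝ Z]

lemma chain_unique {f : Y → Z} {y ξ : Y} {L L' : Z}
    (h : HasChainDiffAt f y ξ L) (h' : HasChainDiffAt f y ξ L') : L = L' := by
  have hθ : ∀ m : ℕ, ((m : ℝ) + 1)⁻¹ ≠ 0 := by
    intro m
    positivity
  have hθ0 : Tendsto (fun m : ℕ => ((m : ℝ) + 1)⁻¹) atTop (nhds 0) := by
    simpa [one_div] using (tendsto_one_div_add_atTop_nhds_zero_nat : Tendsto (fun n : ℕ => 1 / ((n : ℝ) + 1)) atTop (nhds 0))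
  exact tendsto_nhds_unique
    (h (fun _ => ξ) _ hθ tendsto_const_nhds hθ0)
    (h' (fun _ => ξ) _ hθ tendsto_const_nhds hθ0)

lemma chain_smul_dir {f : Y → Z} {y ξ : Y} {L : Z}
    (h : HasChainDiffAt f y ξ L) {c : ℝ} (hc : c ≠ 0) :
    HasChainDiffAt f y (c • ξ) (c • L) := by
  intro u θ hθ hu hθ0
  have h1 : Tendsto (fun m => c⁻¹ • u m) atTop (nhds ξ) := by
    have := hu.const_smul c⁻¹
    simpa [smul_smul, inv_mul_cancel₀ hc] using this
  have h2 := h (fun m => c⁻¹ • u m) (fun m => c * θ m)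
    (fun m => mul_ne_zero hc (hθ m)) h1 (by simpa using hθ0.const_mul c)
  have h3 := h2.const_smul c
  refine h3.congr fun m => ?_
  have e1 : (c * θ m) • (c⁻¹ • u m) = θ m • u m := by
    rw [smul_smul, mul_assoc, mul_comm (θ m), ← mul_assoc, mul_inv_cancel₀ hc, one_mul]
  have e2 : c • ((c * θ m)⁻¹ • (f (y + θ m • u m) - f y))
      = (θ m)⁻¹ • (f (y + θ m • u m) - f y) := by
    rw [smul_smul, mul_inv, ← mul_assoc, mul_inv_cancel₀ hc, one_mul]
  rw [e1] at *
  exact e2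

lemma hasDerivAt_of_chain {f : Y → Z} {y ξ : Y} {L : Z} (t₀ : ℝ)
    (h : HasChainDiffAt f (y + t₀ • ξ) ξ L) :
    HasDerivAt (fun t : ℝ => f (y + t • ξ)) L t₀ := by
  rw [hasDerivAt_iff_tendsto_slope, Filter.tendsto_iff_seq_tendsto]
  intro u hu
  rw [tendsto_nhdsWithin_iff] at hu
  obtain ⟨hu1, hu2⟩ := hu
  obtain ⟨N, hN⟩ := Filter.eventually_atTop.1 hu2
  set θ : ℕ → ℝ := fun m => u (m + N) - t₀ with hθdef
  have hθne : ∀ m, θ m ≠ 0 := fun m =>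
    sub_ne_zero.2 (hN (m + N) (Nat.le_add_left N m))
  have hθ0 : Tendsto θ atTop (nhds 0) := by
    have := (hu1.comp (tendsto_add_atTop_nat N)).sub_const t₀
    simpa using this
  have key := h (fun _ => ξ) θ hθne tendsto_const_nhds hθ0
  rw [← Filter.tendsto_add_atTop_iff_nat N]
  refine key.congr fun m => ?_
  have e : y + u (m + N) • ξ = (y + t₀ • ξ) + θ m • ξ := by
    simp only [hθdef, sub_smul]
    abel
  simp [slope_def_module, hθdef, e]

/-- Key uniform-differentiation lemma from continuity of the partial chain
differential. -/
lemma key_tendsto (F : Y × Y → Z) (U : Set (Y × Y)) (p₀ : Y × Y)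
    (hU : U ∈ nhds p₀) (D₁ : Y × Y → Y → Z)
    (hD₁ : ∀ p ∈ U, ∀ ξ : Y, HasChainDiffAt (fun y₀ => F (y₀, p.2)) p.1 ξ (D₁ p ξ))
    (hc₁ : ContinuousOn (fun q : (Y × Y) × Y => D₁ q.1 q.2) (U ×ˢ (Set.univ : Set Y)))
    (Lg : Y) (b v : ℕ → Y) (θ : ℕ → ℝ) (hθ : ∀ m, θ m ≠ 0)
    (hb : Tendsto b atTop (nhds p₀.2)) (hv : Tendsto v atTop (nhds Lg))
    (hθ0 : Tendsto θ atTop (nhds (0 : ℝ))) :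
    Tendsto (fun m => (θ m)⁻¹ • (F (p₀.1 + θ m • v m, b m) - F (p₀.1, b m)))
      atTop (nhds (D₁ p₀ Lg)) := by
  obtain ⟨r, hr, hrU⟩ := Metric.mem_nhds_iff.1 hU
  have hCA : ContinuousAt (fun q : (Y × Y) × Y => D₁ q.1 q.2) (p₀, Lg) :=
    hc₁.continuousAt (by exact prod_mem_nhds hU univ_mem)
  rw [Metric.tendsto_atTop]
  intro ε hε
  obtain ⟨δ, hδ, hδball⟩ := Metric.continuousAt_iff.1 hCA (ε / 2) (by positivity)
  have hsm : Tendsto (fun m => |θ m| * ‖v m‖) atTop (nhds 0) := by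
    have := (hθ0.abs).mul hv.norm
    simpa using this
  have E1 : ∀ᶠ m in atTop, |θ m| * ‖v m‖ < min δ r :=
    hsm.eventually (eventually_lt_nhds (lt_min hδ hr))
  have E2 : ∀ᶠ m in atTop, dist (b m) p₀.2 < min δ r :=
    hb.eventually (Metric.ball_mem_nhds _ (lt_min hδ hr))
  have E3 : ∀ᶠ m in atTop, dist (v m) Lg < δ :=
    hv.eventually (Metric.ball_mem_nhds _ hδ)
  obtain ⟨N, hN⟩ := Filter.eventually_atTop.1 (E1.and (E2.and E3))
  refine ⟨N, fun m hm => ?_⟩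
  obtain ⟨h1, h2, h3⟩ := hN m hm
  set w : Y := θ m • v m with hw
  have hwnorm : ‖w‖ < min δ r := by
    simpa [hw, norm_smul] using h1
  -- all segment points are in U and δ-close
  have hseg : ∀ s ∈ Icc (0 : ℝ) 1, (p₀.1 + s • w, b m) ∈ U := by
    intro s hs
    apply hrU
    rw [Metric.mem_ball, Prod.dist_eq]
    refine max_lt ?_ (h2.trans_le (min_le_right _ _))
    rw [dist_eq_norm]
    simp only [add_sub_cancel_left]
    calc ‖s • w‖ = |s| * ‖w‖ := by rw [norm_smul, Real.norm_eq_abs]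
    _ ≤ 1 * ‖w‖ := by
        apply mul_le_mul_of_nonneg_right _ (norm_nonneg _)
        rw [abs_le]; exact ⟨by linarith [hs.1], hs.2⟩
    _ < r := by rw [one_mul]; exact hwnorm.trans_le (min_le_right _ _)
  have hclose : ∀ s ∈ Icc (0 : ℝ) 1,
      ‖D₁ (p₀.1 + s • w, b m) (v m) - D₁ p₀ Lg‖ < ε / 2 := by
    intro s hs
    have : dist (((p₀.1 + s • w, b m), v m) : (Y × Y) × Y) ((p₀, Lg)) < δ := by
      rw [Prod.dist_eq, Prod.dist_eq]
      refine max_lt (max_lt ?_ (h2.trans_le (min_le_left _ _))) h3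
      rw [dist_eq_norm]
      simp only [add_sub_cancel_left]
      calc ‖s • w‖ = |s| * ‖w‖ := by rw [norm_smul, Real.norm_eq_abs]
      _ ≤ 1 * ‖w‖ := by
          apply mul_le_mul_of_nonneg_right _ (norm_nonneg _)
          rw [abs_le]; exact ⟨by linarith [hs.1], hs.2⟩
      _ < δ := by rw [one_mul]; exact hwnorm.trans_le (min_le_left _ _)
    have := hδball this
    rwa [dist_eq_norm] at this
  -- derivative of the path
  have hderiv : ∀ s ∈ Icc (0 : ℝ) 1,
      HasDerivAt (fun t : ℝ => F (p₀.1 + t • w, b m))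
        (θ m • D₁ (p₀.1 + s • w, b m) (v m)) s := by
    intro s hs
    have hmem := hseg s hs
    have hcd₁ := hD₁ _ hmem (v m)
    have hcd₂ := chain_smul_dir hcd₁ (hθ m)
    have hcd₃ := hD₁ _ hmem w
    have heq : D₁ (p₀.1 + s • w, b m) w = θ m • D₁ (p₀.1 + s • w, b m) (v m) :=
      chain_unique hcd₃ hcd₂
    have := hasDerivAt_of_chain (f := fun y₀ => F (y₀, b m)) s hcd₃
    rwa [heq] at this
  -- mean value inequality
  set c : Z := θ m • D₁ p₀ Lg with hc
  have hψ : ∀ s ∈ Icc (0 : ℝ) 1,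
      HasDerivWithinAt (fun t : ℝ => F (p₀.1 + t • w, b m) - t • c)
        (θ m • D₁ (p₀.1 + s • w, b m) (v m) - c) (Icc 0 1) s := by
    intro s hs
    simpa [Pi.sub_def] using ((hderiv s hs).sub ((hasDerivAt_id s).smul_const c)).hasDerivWithinAt (s := Icc 0 1)
  have hbound : ∀ s ∈ Ico (0 : ℝ) 1,
      ‖θ m • D₁ (p₀.1 + s • w, b m) (v m) - c‖ ≤ |θ m| * (ε / 2) := by
    intro s hs
    have hs' : s ∈ Icc (0 : ℝ) 1 := Ico_subset_Icc_self hs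
    calc ‖θ m • D₁ (p₀.1 + s • w, b m) (v m) - c‖
        = ‖θ m • (D₁ (p₀.1 + s • w, b m) (v m) - D₁ p₀ Lg)‖ := by
          rw [hc, smul_sub]
      _ = |θ m| * ‖D₁ (p₀.1 + s • w, b m) (v m) - D₁ p₀ Lg‖ := by
          rw [norm_smul, Real.norm_eq_abs]
      _ ≤ |θ m| * (ε / 2) :=
          mul_le_mul_of_nonneg_left (hclose s hs').le (abs_nonneg _)
  have hMVT := norm_image_sub_le_of_norm_deriv_le_segment' hψ hbound 1
    (right_mem_Icc.2 zero_le_one)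
  simp only [one_smul, zero_smul, sub_zero, sub_self, mul_one] at hMVT
  -- conclude
  have hfinal : ‖F (p₀.1 + w, b m) - F (p₀.1, b m) - θ m • D₁ p₀ Lg‖
      ≤ |θ m| * (ε / 2) := by
    have e : F (p₀.1 + (1:ℝ) • w, b m) - c - (F (p₀.1 + (0:ℝ) • w, b m))
        = F (p₀.1 + w, b m) - F (p₀.1, b m) - θ m • D₁ p₀ Lg := by
      simp [hc]
      abel
    calc ‖F (p₀.1 + w, b m) - F (p₀.1, b m) - θ m • D₁ p₀ Lg‖
        = ‖F (p₀.1 + (1:ℝ) • w, b m) - c - (F (p₀.1 + (0:ℝ) • w, b m))‖ := by rw [e]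
      _ ≤ |θ m| * (ε / 2) := by
          convert hMVT using 2
          simp
  rw [dist_eq_norm]
  have e2 : (θ m)⁻¹ • (F (p₀.1 + θ m • v m, b m) - F (p₀.1, b m)) - D₁ p₀ Lg
      = (θ m)⁻¹ • (F (p₀.1 + w, b m) - F (p₀.1, b m) - θ m • D₁ p₀ Lg) := by
    simp only [hw, smul_sub, smul_smul, inv_mul_cancel₀ (hθ m), one_smul]
  rw [e2, norm_smul, Real.norm_eq_abs, abs_inv]
  calc |θ m|⁻¹ * ‖F (p₀.1 + w, b m) - F (p₀.1, b m) - θ m • D₁ p₀ Lg‖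
      ≤ |θ m|⁻¹ * (|θ m| * (ε / 2)) := by
        apply mul_le_mul_of_nonneg_left hfinal (by positivity)
    _ = ε / 2 := by
        rw [← mul_assoc, inv_mul_cancel₀ (abs_ne_zero.2 (hθ m)), one_mul]
    _ < ε := by linarith

end Helpers

/-- Step of the second-order chain rule: for `F : Y × Y → Z` linear in its
second argument, with partial chain differentials `D₁, D₂` existing and
continuous on a neighbourhood `U` of `(g x, h x)`, and `g, h` chain
differentiable at `x` in direction `η`, the map `x ↦ F (g x, h x)` has chain
differential `δ₁F(g x, h x; δg(x;η)) + F (g x, δh(x;η))` at `x` in direction `η`. -/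
theorem second_order_step {X Y Z : Type*}
    [NormedAddCommGroup X] [NormedSpace ℝ X]
    [NormedAddCommGroup Y] [NormedSpace ℝ Y]
    [NormedAddCommGroup Z] [NormedSpace ℝ Z]
    (F : Y × Y → Z) (g h : X → Y) (x η : X)
    (U : Set (Y × Y)) (hU : U ∈ nhds (g x, h x))
    (hFlin : ∀ y₀ : Y, IsLinearMap ℝ (fun y₁ => F (y₀, y₁)))
    (hFcont : ContinuousOn F U)
    (D₁ : Y × Y → Y → Z) (D₂ : Y × Y → Y → Z)
    (hD₁ : ∀ p ∈ U, ∀ ξ : Y, HasChainDiffAt (fun y₀ => F (y₀, p.2)) p.1 ξ (D₁ p ξ))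
    (hD₂ : ∀ p ∈ U, ∀ ξ : Y, HasChainDiffAt (fun y₁ => F (p.1, y₁)) p.2 ξ (D₂ p ξ))
    (hc₁ : ContinuousOn (fun q : (Y × Y) × Y => D₁ q.1 q.2) (U ×ˢ (Set.univ : Set Y)))
    (hc₂ : ContinuousOn (fun q : (Y × Y) × Y => D₂ q.1 q.2) (U ×ˢ (Set.univ : Set Y)))
    (Lg Lh : Y)
    (hg : HasChainDiffAt g x η Lg)
    (hh : HasChainDiffAt h x η Lh) :
    HasChainDiffAt (fun x' => F (g x', h x')) x η
      (D₁ (g x, h x) Lg + F (g x, Lh)) := by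
  have hp₀ : (g x, h x) ∈ U := mem_of_mem_nhds hU
  have lin := hFlin (g x)
  -- D₂ at (g x, h x) in direction Lh is F (g x, Lh)
  have hD₂eq : D₂ (g x, h x) Lh = F (g x, Lh) := by
    have hcd := hD₂ _ hp₀ Lh
    have hθ : ∀ m : ℕ, ((m : ℝ) + 1)⁻¹ ≠ 0 := by intro m; positivity
    have hθ0 : Tendsto (fun m : ℕ => ((m : ℝ) + 1)⁻¹) atTop (nhds 0) := by
      simpa [one_div] using (tendsto_one_div_add_atTop_nhds_zero_nat : Tendsto (fun n : ℕ => 1 / ((n : ℝ) + 1)) atTop (nhds 0))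
    have t1 := hcd (fun _ => Lh) _ hθ tendsto_const_nhds hθ0
    have t2 : Tendsto (fun m : ℕ =>
        (((m : ℝ) + 1)⁻¹ : ℝ)⁻¹ • (F (g x, h x + ((m : ℝ) + 1)⁻¹ • Lh) - F (g x, h x)))
        atTop (nhds (F (g x, Lh))) := by
      have e : ∀ m : ℕ,
          (((m : ℝ) + 1)⁻¹ : ℝ)⁻¹ • (F (g x, h x + ((m : ℝ) + 1)⁻¹ • Lh) - F (g x, h x))
          = F (g x, Lh) := by
        intro m
        rw [lin.map_add, lin.map_smul, add_sub_cancel_left, smul_smul,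
          inv_inv, mul_inv_cancel₀ (by positivity : ((m : ℝ) + 1) ≠ 0), one_smul]
      exact Tendsto.congr (fun m => (e m).symm) tendsto_const_nhds
    exact tendsto_nhds_unique t1 t2
  intro u θ hθ hu hθ0
  set ξ : ℕ → Y := fun m => (θ m)⁻¹ • (g (x + θ m • u m) - g x) with hξdef
  set ζ : ℕ → Y := fun m => (θ m)⁻¹ • (h (x + θ m • u m) - h x) with hζdef
  have hξ : Tendsto ξ atTop (nhds Lg) := hg u θ hθ hu hθ0
  have hζ : Tendsto ζ atTop (nhds Lh) := hh u θ hθ hu hθ0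
  have hgex : ∀ m, g (x + θ m • u m) = g x + θ m • ξ m := by
    intro m
    rw [hξdef]; simp only []
    rw [smul_smul, mul_inv_cancel₀ (hθ m), one_smul, add_sub_cancel]
  have hhex : ∀ m, h (x + θ m • u m) = h x + θ m • ζ m := by
    intro m
    rw [hζdef]; simp only []
    rw [smul_smul, mul_inv_cancel₀ (hθ m), one_smul, add_sub_cancel]
  set b : ℕ → Y := fun m => h (x + θ m • u m) with hbdef
  have hb : Tendsto b atTop (nhds (h x)) := by
    have : Tendsto (fun m => h x + θ m • ζ m) atTop (nhds (h x + (0 : ℝ) • Lh)) :=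
      tendsto_const_nhds.add (hθ0.smul hζ)
    simp only [zero_smul, add_zero] at this
    refine this.congr fun m => (hhex m).symm
  -- first term
  have T1 : Tendsto (fun m => (θ m)⁻¹ • (F (g x + θ m • ξ m, b m) - F (g x, b m)))
      atTop (nhds (D₁ (g x, h x) Lg)) :=
    key_tendsto F U (g x, h x) hU D₁ hD₁ hc₁ Lg b ξ θ hθ hb hξ hθ0
  -- second term
  have T2 : Tendsto (fun m => (θ m)⁻¹ • (F (g x, b m) - F (g x, h x)))
      atTop (nhds (F (g x, Lh))) := by
    have e : ∀ m, (θ m)⁻¹ • (F (g x, b m) - F (g x, h x)) = F (g x, ζ m) := by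
      intro m
      rw [hbdef]; simp only []
      rw [hhex m, lin.map_add, lin.map_smul, add_sub_cancel_left, smul_smul,
        inv_mul_cancel₀ (hθ m), one_smul]
    rw [← hD₂eq]
    -- F (g x, ζ m) → D₂ (g x, h x) Lh
    have hcd := hD₂ _ hp₀ Lh
    have hθ' : ∀ m : ℕ, ((m : ℝ) + 1)⁻¹ ≠ 0 := by intro m; positivity
    have hθ0' : Tendsto (fun m : ℕ => ((m : ℝ) + 1)⁻¹) atTop (nhds 0) := by
      simpa [one_div] using (tendsto_one_div_add_atTop_nhds_zero_nat : Tendsto (fun n : ℕ => 1 / ((n : ℝ) + 1)) atTop (nhds 0))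
    have t1 := hcd ζ _ hθ' hζ hθ0'
    have e2 : ∀ m : ℕ,
        (((m : ℝ) + 1)⁻¹ : ℝ)⁻¹ • (F (g x, h x + ((m : ℝ) + 1)⁻¹ • ζ m) - F (g x, h x))
        = F (g x, ζ m) := by
      intro m
      rw [lin.map_add, lin.map_smul, add_sub_cancel_left, smul_smul,
        inv_inv, mul_inv_cancel₀ (by positivity : ((m : ℝ) + 1) ≠ 0), one_smul]
    simp only [e2] at t1
    exact t1.congr fun m => (e m).symm
  have := T1.add T2
  refine this.congr fun m => ?_
  simp only [hbdef, ← smul_add]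
  rw [hgex m, hhex m]
  congr 1
  abel
end
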